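/- The restricted right rule for intuitionistic implication is sound: if Θ is a finite set of persistent formulas and the semantic consequence Θ, A ⊨ B holds, then Θ ⊨ A →ᵢ B holds. -/

import Mathlib

/-- Terms: variables (named by naturals) and constant symbols. -/
inductive Tm : Type
| var : ℕ → Tm
| const : ℕ → Tm
deriving DecidableEq

/-- Formulas of the combined language: atoms, ⊥, ∧, ∨, intuitionistic and
classical implication, intuitionistic and classical universal quantifier,
and the existential quantifier. -/
inductive Fm : Type
| atom : ℕ → List Tm → Fm
| bot : Fm
| and : Fm → Fm → Fm
| or : Fm → Fm → Fm
| impI : Fm → Fm → Fm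
| impC : Fm → Fm → Fm
| allI : ℕ → Fm → Fm
| allC : ℕ → Fm → Fm
| ex : ℕ → Fm → Fm
deriving DecidableEq

def Fm.top : Fm := .impI .bot .bot
def Fm.negC (A : Fm) : Fm := .impC A .bot
def Fm.negI (A : Fm) : Fm := .impI A .bot

def Tm.fv : Tm → Set ℕ
| .var x => {x}
| .const _ => ∅

/-- Free variables of a formula. -/
def Fm.fv : Fm → Set ℕ
| .atom _ ts => {x | ∃ t ∈ ts, x ∈ t.fv}
| .bot => ∅
| .and A B => A.fv ∪ B.fv
| .or A B => A.fv ∪ B.fv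
| .impI A B => A.fv ∪ B.fv
| .impC A B => A.fv ∪ B.fv
| .allI x A => A.fv \ {x}
| .allC x A => A.fv \ {x}
| .ex x A => A.fv \ {x}

/-- Bound variables of a formula. -/
def Fm.bv : Fm → Set ℕ
| .atom _ _ => ∅
| .bot => ∅
| .and A B => A.bv ∪ B.bv
| .or A B => A.bv ∪ B.bv
| .impI A B => A.bv ∪ B.bv
| .impC A B => A.bv ∪ B.bv
| .allI x A => insert x A.bv
| .allC x A => insert x A.bv
| .ex x A => insert x A.bv

/-- All variables (free and bound) of a formula. -/
def Fm.vars : Fm → Set ℕ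
| .atom _ ts => {x | ∃ t ∈ ts, x ∈ t.fv}
| .bot => ∅
| .and A B => A.vars ∪ B.vars
| .or A B => A.vars ∪ B.vars
| .impI A B => A.vars ∪ B.vars
| .impC A B => A.vars ∪ B.vars
| .allI x A => insert x A.vars
| .allC x A => insert x A.vars
| .ex x A => insert x A.vars

def Tm.subst (x : ℕ) (u : Tm) : Tm → Tm
| .var y => if y = x then u else .var y
| .const c => .const c

/-- Substitution of term `u` for variable `x` (under the standing assumption
that bound and free variables are disjoint, this is clash-avoiding). -/
def Fm.subst : Fm → ℕ → Tm → Fm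
| .atom P ts, x, u => .atom P (ts.map (Tm.subst x u))
| .bot, _, _ => .bot
| .and A B, x, u => .and (A.subst x u) (B.subst x u)
| .or A B, x, u => .or (A.subst x u) (B.subst x u)
| .impI A B, x, u => .impI (A.subst x u) (B.subst x u)
| .impC A B, x, u => .impC (A.subst x u) (B.subst x u)
| .allI y A, x, u => .allI y (if y = x then A else A.subst x u)
| .allC y A, x, u => .allC y (if y = x then A else A.subst x u)
| .ex y A, x, u => .ex y (if y = x then A else A.subst x u)

/-- Persistent formulas: atoms, →ᵢ-formulas and ∀ᵢ-formulas. -/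
def Fm.Persistent : Fm → Prop
| .atom _ _ => True
| .impI _ _ => True
| .allI _ _ => True
| _ => False

/-- Purely intuitionistic formulas (no →_c, no ∀_c). -/
def Fm.IsJ : Fm → Prop
| .atom _ _ => True
| .bot => True
| .and A B => A.IsJ ∧ B.IsJ
| .or A B => A.IsJ ∧ B.IsJ
| .impI A B => A.IsJ ∧ B.IsJ
| .impC _ _ => False
| .allI _ A => A.IsJ
| .allC _ _ => False
| .ex _ A => A.IsJ

/-- Purely classical formulas (no →ᵢ, no ∀ᵢ). -/
def Fm.IsC : Fm → Prop
| .atom _ _ => True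
| .bot => True
| .and A B => A.IsC ∧ B.IsC
| .or A B => A.IsC ∧ B.IsC
| .impI _ _ => False
| .impC A B => A.IsC ∧ B.IsC
| .allI _ _ => False
| .allC _ A => A.IsC
| .ex _ A => A.IsC

/-- A raw Kripke structure for the combined first-order language. -/
structure KModel (U : Type) where
  W : Type
  R : W → W → Prop
  D : W → Set U
  cI : ℕ → U
  V : ℕ → W → Set (List U)

/-- The conditions making a raw structure an intuitionistic Kripke model:
`R` is a preorder, domains are nonempty, monotone, with nonempty
intersection, constants are rigid (interpreted in every domain), and the
predicate valuation is monotone (hereditary) along `R`. -/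
structure KModel.IsKripke {U : Type} (M : KModel U) : Prop where
  wNonempty : Nonempty M.W
  refl : ∀ w, M.R w w
  trans : ∀ {w v u}, M.R w v → M.R v u → M.R w u
  dNonempty : ∀ w, (M.D w).Nonempty
  dMono : ∀ {w v}, M.R w v → M.D w ⊆ M.D v
  dInter : (⋂ w, M.D w).Nonempty
  cMem : ∀ c w, M.cI c ∈ M.D w
  vMono : ∀ P {w v}, M.R w v → M.V P w ⊆ M.V P v

def Tm.val {U : Type} (M : KModel U) (g : ℕ → U) : Tm → U
| .var x => g x
| .const c => M.cI c

/-- Satisfaction of a formula at a world under an assignment. -/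
def Fm.Sat {U : Type} (M : KModel U) : Fm → M.W → (ℕ → U) → Prop
| .atom P ts, w, g => ts.map (Tm.val M g) ∈ M.V P w
| .bot, _, _ => False
| .and A B, w, g => A.Sat M w g ∧ B.Sat M w g
| .or A B, w, g => A.Sat M w g ∨ B.Sat M w g
| .impI A B, w, g => ∀ v, M.R w v → A.Sat M v g → B.Sat M v g
| .impC A B, w, g => A.Sat M w g → B.Sat M w g
| .allI x A, w, g => ∀ v, M.R w v → ∀ d ∈ M.D v, A.Sat M v (Function.update g x d)
| .allC x A, w, g => ∀ d ∈ M.D w, A.Sat M w (Function.update g x d)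
| .ex x A, w, g => ∃ d ∈ M.D w, A.Sat M w (Function.update g x d)

/-- Multi-succedent semantic consequence: at every world of every Kripke
model, under any assignment into the domain, if all of `Γ` holds then some
member of `Δ` holds. -/
def Conseq (Γ Δ : List Fm) : Prop :=
  ∀ (U : Type) (M : KModel U), M.IsKripke → ∀ (w : M.W) (g : ℕ → U),
    (∀ x, g x ∈ M.D w) → (∀ A ∈ Γ, A.Sat M w g) → ∃ B ∈ Δ, B.Sat M w g

/-- The sequent calculus G(FOC+J). -/
inductive Der : List Fm → List Fm → Prop
| id (A : Fm) : Der [A] [A]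
| botL : Der [.bot] []
| perm {Γ Γ' Δ Δ'} : Γ.Perm Γ' → Δ.Perm Δ' → Der Γ Δ → Der Γ' Δ'
| wL {Γ Δ} (A) : Der Γ Δ → Der (A :: Γ) Δ
| wR {Γ Δ} (A) : Der Γ Δ → Der Γ (A :: Δ)
| cL {Γ Δ A} : Der (A :: A :: Γ) Δ → Der (A :: Γ) Δ
| cR {Γ Δ A} : Der Γ (A :: A :: Δ) → Der Γ (A :: Δ)
| cut {Γ Δ P S A} : Der Γ (A :: Δ) → Der (A :: P) S → Der (Γ ++ P) (Δ ++ S)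
| impIR {Θ A B} : (∀ C ∈ Θ, Fm.Persistent C) →
    Der (A :: Θ) [B] → Der Θ [.impI A B]
| impIL {Γ₁ Γ₂ Δ₁ Δ₂ A B} : Der Γ₁ (A :: Δ₁) → Der (B :: Γ₂) Δ₂ →
    Der (.impI A B :: (Γ₁ ++ Γ₂)) (Δ₁ ++ Δ₂)
| impCR {Γ Δ A B} : Der (A :: Γ) (B :: Δ) → Der Γ (.impC A B :: Δ)
| impCL {Γ₁ Γ₂ Δ₁ Δ₂ A B} : Der Γ₁ (A :: Δ₁) → Der (B :: Γ₂) Δ₂ →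
    Der (.impC A B :: (Γ₁ ++ Γ₂)) (Δ₁ ++ Δ₂)
| andR {Γ Δ A B} : Der Γ (A :: Δ) → Der Γ (B :: Δ) → Der Γ (.and A B :: Δ)
| andL1 {Γ Δ A B} : Der (A :: Γ) Δ → Der (.and A B :: Γ) Δ
| andL2 {Γ Δ A B} : Der (B :: Γ) Δ → Der (.and A B :: Γ) Δ
| orR1 {Γ Δ A B} : Der Γ (A :: Δ) → Der Γ (.or A B :: Δ)
| orR2 {Γ Δ A B} : Der Γ (B :: Δ) → Der Γ (.or A B :: Δ)
| orL {Γ Δ A B} : Der (A :: Γ) Δ → Der (B :: Γ) Δ → Der (.or A B :: Γ) Δ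
| allIR {Θ x z A} : (∀ C ∈ Θ, Fm.Persistent C) →
    (∀ C ∈ Θ, z ∉ Fm.fv C) → z ∉ Fm.fv (.allI x A) → z ∉ Fm.bv A →
    Der Θ [A.subst x (.var z)] → Der Θ [.allI x A]
| allIL {Γ Δ x A} (t : Tm) : (∀ y ∈ t.fv, y ∉ Fm.bv A) →
    Der (A.subst x t :: Γ) Δ → Der (.allI x A :: Γ) Δ
| allCR {Γ Δ x z A} : (∀ C ∈ Γ, z ∉ Fm.fv C) → (∀ C ∈ Δ, z ∉ Fm.fv C) →
    z ∉ Fm.fv (.allC x A) → z ∉ Fm.bv A →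
    Der Γ (A.subst x (.var z) :: Δ) → Der Γ (.allC x A :: Δ)
| allCL {Γ Δ x A} (t : Tm) : (∀ y ∈ t.fv, y ∉ Fm.bv A) →
    Der (A.subst x t :: Γ) Δ → Der (.allC x A :: Γ) Δ
| exR {Γ Δ x A} (t : Tm) : (∀ y ∈ t.fv, y ∉ Fm.bv A) →
    Der Γ (A.subst x t :: Δ) → Der Γ (.ex x A :: Δ)
| exL {Γ Δ x z A} : (∀ C ∈ Γ, z ∉ Fm.fv C) → (∀ C ∈ Δ, z ∉ Fm.fv C) →
    z ∉ Fm.fv (.ex x A) → z ∉ Fm.bv A →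
    Der (A.subst x (.var z) :: Γ) Δ → Der (.ex x A :: Γ) Δ

theorem Fm.Persistent.sat_mono {U : Type} {M : KModel U} (hM : M.IsKripke)
    {C : Fm} (hC : C.Persistent) {w v : M.W} (hwv : M.R w v) {g : ℕ → U}
    (hw : C.Sat M w g) : C.Sat M v g := by
  cases C with
  | atom P _ => exact hM.vMono P hwv hw
  | impI _ _ => exact fun u hvu => hw u (hM.trans hwv hvu)
  | allI _ _ => exact fun u hvu => hw u (hM.trans hwv hvu)
  | _ => exact hC.elim

theorem conseq_singleton_iff {Γ : List Fm} {B : Fm} :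
    Conseq Γ [B] ↔ ∀ (U : Type) (M : KModel U), M.IsKripke → ∀ (w : M.W) (g : ℕ → U),
      (∀ x, g x ∈ M.D w) → (∀ A ∈ Γ, A.Sat M w g) → B.Sat M w g := by
  simp only [Conseq, List.mem_singleton, exists_eq_left]

/-- soundness of the restricted right rule (⇒→ᵢ): if `Θ`
consists of persistent formulas and `Θ, A ⊨ B`, then `Θ ⊨ A →ᵢ B`. -/
theorem impIR_sound (Θ : List Fm) (A B : Fm)
    (hΘ : ∀ C ∈ Θ, Fm.Persistent C)
    (h : Conseq (A :: Θ) [B]) : Conseq Θ [.impI A B] := by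
  rw [conseq_singleton_iff] at h ⊢
  intro U M hM w g hg hΘw v hwv hAv
  have hgv : ∀ x, g x ∈ M.D v := fun x => hM.dMono hwv (hg x)
  have hΘv : ∀ C ∈ Θ, C.Sat M v g := fun C hC => (hΘ C hC).sat_mono hM hwv (hΘw C hC)
  exact h U M hM v g hgv (List.forall_mem_cons.2 ⟨hAv, hΘv⟩)
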